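/- arXiv:1312.1526 — 4 statements merged into one kernel-verified Lean document; each statement's English description precedes it below -/
import Mathlib

section
/- Let P and Q be upward paths in ℝ² with disjoint images. Then Right(P) ∩ Q = ∅ or Left(P) ∩ Q = ∅, where Q is identified with its image. -/
open Set

/-- An upward path: a continuous injective curve on `[0,1]` in `ℝ²` whose
y-coordinate is strictly monotone increasing. -/
structure UpwardPath where
  toFun : ℝ → ℝ × ℝ
  continuousOn : ContinuousOn toFun (Set.Icc 0 1)
  injOn : Set.InjOn toFun (Set.Icc 0 1)
  strictMonoY : StrictMonoOn (fun t => (toFun t).2) (Set.Icc 0 1)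

namespace UpwardPath

/-- The image (trace) of an upward path in the plane. -/
def image (P : UpwardPath) : Set (ℝ × ℝ) := P.toFun '' Set.Icc 0 1

/-- The set of points strictly to the right of `P`, at heights in the y-range of `P`. -/
def Right (P : UpwardPath) : Set (ℝ × ℝ) :=
  {p | (P.toFun 0).2 ≤ p.2 ∧ p.2 ≤ (P.toFun 1).2 ∧
    ∀ u' : ℝ, (u', p.2) ∈ P.image → u' < p.1}

/-- The set of points strictly to the left of `P`, at heights in the y-range of `P`. -/
def Left (P : UpwardPath) : Set (ℝ × ℝ) :=
  {p | (P.toFun 0).2 ≤ p.2 ∧ p.2 ≤ (P.toFun 1).2 ∧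
    ∀ u' : ℝ, (u', p.2) ∈ P.image → p.1 < u'}

/-- `P.Prec Q` (written `P ≺ Q`): some point of `Q` lies strictly to the right
(same y-coordinate, larger x-coordinate) of some point of `P`. -/
def Prec (P Q : UpwardPath) : Prop :=
  ∃ p ∈ P.image, ∃ q ∈ Q.image, p.2 = q.2 ∧ p.1 < q.1

/-- The y-range of an upward path. -/
def yRange (P : UpwardPath) : Set ℝ := Set.Icc (P.toFun 0).2 (P.toFun 1).2

end UpwardPath

/-! Since the height along `P` is continuous and strictly increasing, `P` is the graph
`u = P.xAt v` of a continuous function of the height `v ∈ P.yRange`. If `Q` had a point right of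
`P` and one left of `P`, then `s ↦ (Q s).1 - P.xAt (Q s).2` would change sign between their
parameters (where, by monotonicity, the height of `Q` stays in `P.yRange`), and at a zero `Q`
meets `P`. -/

theorem StrictMonoOn.continuousOn_invFunOn_Icc {α β : Type*}
    [ConditionallyCompleteLinearOrder α] [TopologicalSpace α] [OrderTopology α] [DenselyOrdered α]
    [Nonempty α] [LinearOrder β] [TopologicalSpace β] [OrderTopology β]
    {f : α → β} {a b : α} (hab : a ≤ b)
    (hf : ContinuousOn f (Icc a b)) (hm : StrictMonoOn f (Icc a b)) :
    ContinuousOn (Function.invFunOn f (Icc a b)) (Icc (f a) (f b)) := by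
  have hsurj : SurjOn f (Icc a b) (Icc (f a) (f b)) := intermediate_value_Icc hab hf
  let g : Icc (f a) (f b) → Icc a b := fun v => ⟨_, hsurj.mapsTo_invFunOn v.2⟩
  have hg_mono : Monotone g := fun u v huv => by
    rw [Subtype.mk_le_mk, ← hm.le_iff_le (g u).2 (g v).2, hsurj.rightInvOn_invFunOn u.2,
      hsurj.rightInvOn_invFunOn v.2]
    exact huv
  have hg_surj : Function.Surjective g := fun t =>
    ⟨⟨f t, hm.monotoneOn.mapsTo_Icc t.2⟩, Subtype.ext (hm.injOn.leftInvOn_invFunOn t.2)⟩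
  rw [continuousOn_iff_continuous_domRestrict]
  exact continuous_subtype_val.comp (hg_mono.continuous_of_surjective hg_surj)

theorem exists_mem_uIcc_fst_eq_of_crossing {γ : ℝ → ℝ × ℝ} {φ : ℝ → ℝ} {S : Set ℝ} {s₁ s₂ : ℝ}
    (hγ : ContinuousOn γ (uIcc s₁ s₂)) (hφ : ContinuousOn φ S)
    (hS : MapsTo (fun s => (γ s).2) (uIcc s₁ s₂) S)
    (h₁ : φ (γ s₁).2 ≤ (γ s₁).1) (h₂ : (γ s₂).1 ≤ φ (γ s₂).2) :
    ∃ s ∈ uIcc s₁ s₂, (γ s).1 = φ (γ s).2 := by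
  have hF : ContinuousOn (fun s => (γ s).1 - φ (γ s).2) (uIcc s₁ s₂) :=
    (continuous_fst.comp_continuousOn hγ).sub (hφ.comp (continuous_snd.comp_continuousOn hγ) hS)
  have h0 : (0 : ℝ) ∈ uIcc ((γ s₁).1 - φ (γ s₁).2) ((γ s₂).1 - φ (γ s₂).2) :=
    mem_uIcc.2 (Or.inr ⟨by linarith, by linarith⟩)
  obtain ⟨s, hs, hs0⟩ := intermediate_value_uIcc hF h0
  exact ⟨s, hs, sub_eq_zero.1 hs0⟩

namespace UpwardPath

-- Junk outside `P.yRange`.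
noncomputable def xAt (P : UpwardPath) (v : ℝ) : ℝ :=
  (P.toFun (Function.invFunOn (fun t => (P.toFun t).2) (Icc 0 1) v)).1

theorem continuousOn_y (P : UpwardPath) : ContinuousOn (fun t => (P.toFun t).2) (Icc 0 1) :=
  continuous_snd.comp_continuousOn P.continuousOn

theorem surjOn_yRange (P : UpwardPath) : SurjOn (fun t => (P.toFun t).2) (Icc 0 1) P.yRange :=
  intermediate_value_Icc zero_le_one P.continuousOn_y

theorem continuousOn_xAt (P : UpwardPath) : ContinuousOn P.xAt P.yRange :=
  continuous_fst.comp_continuousOn <| P.continuousOn.comp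
    (P.strictMonoY.continuousOn_invFunOn_Icc zero_le_one P.continuousOn_y)
    P.surjOn_yRange.mapsTo_invFunOn

theorem mk_xAt_mem_image (P : UpwardPath) {v : ℝ} (hv : v ∈ P.yRange) :
    (P.xAt v, v) ∈ P.image :=
  ⟨_, P.surjOn_yRange.mapsTo_invFunOn hv, Prod.ext rfl (P.surjOn_yRange.rightInvOn_invFunOn hv)⟩

end UpwardPath

/-- For vertex-disjoint upward paths `P` and `Q`, either `Q` avoids the region
to the right of `P` or it avoids the region to the left of `P`. -/
theorem path_right_or_left (P Q : UpwardPath)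
    (hdisj : Disjoint P.image Q.image) :
    P.Right ∩ Q.image = ∅ ∨ P.Left ∩ Q.image = ∅ := by
  by_contra! h
  obtain ⟨⟨_, hR, s₁, hs₁, rfl⟩, ⟨_, hL, s₂, hs₂, rfl⟩⟩ := h
  have hI : uIcc s₁ s₂ ⊆ Icc 0 1 := uIcc_subset_Icc hs₁ hs₂
  have hheight : MapsTo (fun s => (Q.toFun s).2) (uIcc s₁ s₂) P.yRange := fun s hs =>
    ordConnected_Icc.uIcc_subset ⟨hR.1, hR.2.1⟩ ⟨hL.1, hL.2.1⟩
      ((Q.strictMonoY.monotoneOn.mono hI).mapsTo_uIcc hs)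
  obtain ⟨s, hs, hx⟩ := exists_mem_uIcc_fst_eq_of_crossing (Q.continuousOn.mono hI)
    P.continuousOn_xAt hheight (hR.2.2 _ (P.mk_xAt_mem_image ⟨hR.1, hR.2.1⟩)).le
    (hL.2.2 _ (P.mk_xAt_mem_image ⟨hL.1, hL.2.1⟩)).le
  have hsP : Q.toFun s ∈ P.image := by
    simpa only [← hx] using P.mk_xAt_mem_image (hheight hs)
  exact hdisj.ne_of_mem hsP ⟨s, hI hs, rfl⟩ rfl
end

section
/- Let P and Q be disjoint upward paths that are incomparable with respect to ≺ in both directions (neither P ≺ Q nor Q ≺ P). Then the y-ranges of P and Q intersect in at most one point; in particular, (Right(P) ∪ Left(P)) ∩ (Right(Q) ∪ Left(Q)) has empty interior, i.e., one path lies (weakly) strictly above the other. -/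
open Set

/-!
Any height shared by the two y-ranges is attained by both paths (intermediate value theorem),
at two distinct points since the paths are disjoint; comparing their x-coordinates gives
`P ≺ Q` or `Q ≺ P`. So the y-ranges are in fact disjoint, and hence so are the regions
`Right ∪ Left`, which lie over them.
-/

namespace UpwardPath

theorem exists_mem_image_snd_eq (P : UpwardPath) {y : ℝ} (hy : y ∈ P.yRange) :
    ∃ p ∈ P.image, p.2 = y := by
  obtain ⟨t, ht, hty⟩ := intermediate_value_Icc zero_le_one
    (continuous_snd.comp_continuousOn P.continuousOn) hy
  exact ⟨P.toFun t, ⟨t, ht, rfl⟩, hty⟩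

theorem prec_or_prec_of_mem_yRange {P Q : UpwardPath} (hdisj : Disjoint P.image Q.image)
    {y : ℝ} (hP : y ∈ P.yRange) (hQ : y ∈ Q.yRange) : P.Prec Q ∨ Q.Prec P := by
  obtain ⟨p, hp, rfl⟩ := P.exists_mem_image_snd_eq hP
  obtain ⟨q, hq, hqy⟩ := Q.exists_mem_image_snd_eq hQ
  have hx : p.1 ≠ q.1 := fun h => hdisj.ne_of_mem hp hq (Prod.ext h hqy.symm)
  rcases hx.lt_or_gt with hlt | hlt
  · exact .inl ⟨p, hp, q, hq, hqy.symm, hlt⟩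
  · exact .inr ⟨q, hq, p, hp, hqy, hlt⟩

theorem disjoint_yRange_of_not_prec {P Q : UpwardPath} (hdisj : Disjoint P.image Q.image)
    (h₁ : ¬ P.Prec Q) (h₂ : ¬ Q.Prec P) : Disjoint P.yRange Q.yRange :=
  Set.disjoint_left.mpr fun _ hP hQ =>
    (prec_or_prec_of_mem_yRange hdisj hP hQ).elim h₁ h₂

theorem right_union_left_subset_preimage_yRange (P : UpwardPath) :
    P.Right ∪ P.Left ⊆ Prod.snd ⁻¹' P.yRange := by
  rintro p (hp | hp) <;> exact ⟨hp.1, hp.2.1⟩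

end UpwardPath

/-- If two disjoint upward paths are incomparable with respect to `≺` in both
directions, then their y-ranges meet in at most one point; in particular the
intersection of their left/right regions has empty interior (one path lies
above the other). -/
theorem incomparable_above (P Q : UpwardPath)
    (hdisj : Disjoint P.image Q.image)
    (h₁ : ¬ P.Prec Q) (h₂ : ¬ Q.Prec P) :
    (P.yRange ∩ Q.yRange).Subsingleton ∧
    interior ((P.Right ∪ P.Left) ∩ (Q.Right ∪ Q.Left)) = ∅ := by
  have hy := UpwardPath.disjoint_yRange_of_not_prec hdisj h₁ h₂
  have hregions : (P.Right ∪ P.Left) ∩ (Q.Right ∪ Q.Left) = ∅ :=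
    Set.subset_empty_iff.mp fun p ⟨hp, hq⟩ =>
      hy.ne_of_mem (P.right_union_left_subset_preimage_yRange hp)
        (Q.right_union_left_subset_preimage_yRange hq) rfl
  refine ⟨?_, by rw [hregions, interior_empty]⟩
  rw [hy.inter_eq]
  exact Set.subsingleton_empty
end

section
/- Let 𝒫 be a finite set of pairwise disjoint upward paths and suppose P₀ ≺ P₁ ≺ … ≺ P_k is a chain in 𝒫 with k ≥ 1 chosen of minimum length among cycles, i.e., additionally P_k ≺ P₀. Then no such chain exists; equivalently, the relation ≺ on 𝒫 has no directed cycles. -/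
/-!
An arrow `P ≺ Q` between disjoint paths means that `P` lies strictly to the left of `Q` at *every*
common height: the horizontal gap between them is continuous in the height, never zero, and so
keeps its sign. In a cycle, take the path `Q` whose lowest point is highest. Its neighbours
`P ≺ Q ≺ R` both reach the height of that lowest point, where `P` lies left of `Q` and `Q` left
of `R`; hence `P ≺ R`, and `Q` can be removed from the cycle. Repeating this ends in a loop
`P ≺ P`, which is impossible.
-/

open Set

namespace Relation

variable {α : Type*} {R : α → α → Prop}

def IsCycle (R : α → α → Prop) {n : ℕ} (f : Fin (n + 1) → α) : Prop :=
  ∀ i, R (f i) (f (i + 1))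

theorem isCycle_iff {n : ℕ} {f : Fin (n + 1) → α} :
    IsCycle R f ↔
      (∀ i : Fin n, R (f i.castSucc) (f i.succ)) ∧ R (f (Fin.last n)) (f 0) := by
  refine ⟨fun hf => ⟨fun i => ?_, ?_⟩, fun ⟨hchain, hwrap⟩ i => ?_⟩
  · simpa only [Fin.coeSucc_eq_succ] using hf i.castSucc
  · simpa only [Fin.last_add_one] using hf (Fin.last n)
  · induction i using Fin.lastCases with
    | last => rwa [Fin.last_add_one]
    | cast i => rw [Fin.coeSucc_eq_succ]; exact hchain i

theorem IsCycle.comp_add_right {n : ℕ} {f : Fin (n + 1) → α} (hf : IsCycle R f)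
    (k : Fin (n + 1)) : IsCycle R (fun i => f (i + k)) := fun i => by
  simpa only [add_right_comm i 1 k] using hf (i + k)

theorem IsCycle.comp_castSucc {n : ℕ} {f : Fin (n + 2) → α} (hf : IsCycle R f)
    (hskip : R (f (Fin.last n).castSucc) (f 0)) : IsCycle R (f ∘ Fin.castSucc) :=
  isCycle_iff.2 ⟨fun i => (isCycle_iff.1 hf).1 i.castSucc, hskip⟩

theorem not_isCycle_of_shortcut {β : Type*} [LinearOrder β] (h : α → β)
    (hirr : ∀ a, ¬ R a a)
    (hshort : ∀ a b c, R a b → R b c → h a ≤ h b → h c ≤ h b → R a c) :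
    ∀ {n : ℕ} (f : Fin (n + 1) → α), ¬ IsCycle R f := by
  intro n
  induction n with
  | zero => exact fun f hf => hirr (f 0) (hf 0)
  | succ n ih =>
    intro f hf
    obtain ⟨j, hj⟩ := Finite.exists_max (h ∘ f)
    -- rotate the cycle so that its `h`-maximal entry `f j` comes last, then skip it
    set g : Fin (n + 2) → α := fun i => f (i + (j + 1))
    have hg : IsCycle R g := hf.comp_add_right (j + 1)
    have hmax : ∀ i, h (g i) ≤ h (g (Fin.last (n + 1))) := by
      intro i
      simpa only [g, Function.comp_apply, add_left_comm _ j, Fin.last_add_one, add_zero]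
        using hj (i + (j + 1))
    have hin : R (g (Fin.last n).castSucc) (g (Fin.last (n + 1))) := by
      simpa only [Fin.coeSucc_eq_succ, Fin.succ_last] using hg (Fin.last n).castSucc
    have hout : R (g (Fin.last (n + 1))) (g 0) := by
      simpa only [Fin.last_add_one] using hg (Fin.last (n + 1))
    exact ih _ (hg.comp_castSucc (hshort _ _ _ hin hout (hmax _) (hmax _)))

end Relation

namespace UpwardPath

variable (P : UpwardPath) {Q R : UpwardPath}

theorem snd_mem_yRange {p : ℝ × ℝ} (hp : p ∈ P.image) : p.2 ∈ P.yRange := by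
  obtain ⟨t, ht, rfl⟩ := hp
  exact ⟨P.strictMonoY.monotoneOn (left_mem_Icc.2 zero_le_one) ht ht.1,
    P.strictMonoY.monotoneOn ht (right_mem_Icc.2 zero_le_one) ht.2⟩

theorem bijective_height :
    Function.Bijective fun t : Icc (0 : ℝ) 1 =>
      (⟨(P.toFun t).2, P.snd_mem_yRange ⟨t, t.2, rfl⟩⟩ : P.yRange) := by
  refine ⟨fun s t hst => Subtype.ext (P.strictMonoY.injOn s.2 t.2 (congrArg Subtype.val hst)),
    fun y => ?_⟩
  obtain ⟨t, ht, hty⟩ := intermediate_value_Icc zero_le_one P.continuousOn.snd y.2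
  exact ⟨⟨t, ht⟩, Subtype.ext hty⟩

/-- The height map `t ↦ (P.toFun t).2`: a continuous bijection from a compact space, hence a
homeomorphism. -/
noncomputable def heightHomeomorph : Icc (0 : ℝ) 1 ≃ₜ P.yRange :=
  Continuous.homeoOfEquivCompactToT2 (f := Equiv.ofBijective _ P.bijective_height)
    (P.continuousOn.domRestrict.snd.subtype_mk _)

noncomputable def pointAt (y : P.yRange) : ℝ × ℝ := P.toFun (P.heightHomeomorph.symm y)

theorem continuous_pointAt : Continuous P.pointAt :=
  P.continuousOn.domRestrict.comp P.heightHomeomorph.symm.continuous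

theorem pointAt_mem_image (y : P.yRange) : P.pointAt y ∈ P.image :=
  ⟨_, (P.heightHomeomorph.symm y).2, rfl⟩

theorem pointAt_snd (y : P.yRange) : (P.pointAt y).2 = y :=
  congrArg Subtype.val (P.heightHomeomorph.apply_symm_apply y)

theorem pointAt_eq_of_mem {p : ℝ × ℝ} (hp : p ∈ P.image) {y : P.yRange}
    (hy : (y : ℝ) = p.2) : P.pointAt y = p := by
  obtain ⟨t, ht, rfl⟩ := hp
  have : P.heightHomeomorph.symm y = ⟨t, ht⟩ :=
    P.heightHomeomorph.symm_apply_eq.2 (Subtype.ext hy)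
  rw [pointAt, this]

theorem eq_of_mem_image_of_snd_eq {p q : ℝ × ℝ} (hp : p ∈ P.image) (hq : q ∈ P.image)
    (hpq : p.2 = q.2) : p = q := by
  rw [← P.pointAt_eq_of_mem hp (y := ⟨p.2, P.snd_mem_yRange hp⟩) rfl,
    P.pointAt_eq_of_mem hq (y := ⟨p.2, P.snd_mem_yRange hp⟩) hpq]

theorem not_prec_self : ¬ P.Prec P := by
  rintro ⟨p, hp, q, hq, hpq, hlt⟩
  rw [P.eq_of_mem_image_of_snd_eq hp hq hpq] at hlt
  exact hlt.false

variable {P}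

theorem Prec.ne (h : P.Prec Q) : P ≠ Q := by
  rintro rfl
  exact P.not_prec_self h

/-- Over the common heights of `P` and `Q` the horizontal gap from `P` to `Q` is continuous and,
by disjointness, never zero; so it cannot change sign. -/
theorem Prec.not_prec (hd : Disjoint P.image Q.image) (h : P.Prec Q) : ¬ Q.Prec P := by
  rintro ⟨q₁, hq₁, p₁, hp₁, hy₁, hx₁⟩
  obtain ⟨p₀, hp₀, q₀, hq₀, hy₀, hx₀⟩ := h
  set I := P.yRange ∩ Q.yRange
  have : PreconnectedSpace I :=
    Subtype.preconnectedSpace (ordConnected_Icc.inter ordConnected_Icc).isPreconnected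
  let gap : I → ℝ := fun y =>
    (Q.pointAt (inclusion inter_subset_right y)).1 - (P.pointAt (inclusion inter_subset_left y)).1
  have hgap : Continuous gap :=
    ((Q.continuous_pointAt.comp (continuous_inclusion _)).fst).sub
      ((P.continuous_pointAt.comp (continuous_inclusion _)).fst)
  have mem_I : ∀ {p q}, p ∈ P.image → q ∈ Q.image → p.2 = q.2 → p.2 ∈ I :=
    fun hp hq hpq => ⟨P.snd_mem_yRange hp, hpq ▸ Q.snd_mem_yRange hq⟩
  have gap_eq : ∀ {p q} (hp : p ∈ P.image) (hq : q ∈ Q.image) (hpq : p.2 = q.2),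
      gap ⟨p.2, mem_I hp hq hpq⟩ = q.1 - p.1 := fun hp hq hpq =>
    congrArg₂ (fun a b : ℝ × ℝ => a.1 - b.1) (Q.pointAt_eq_of_mem hq hpq)
      (P.pointAt_eq_of_mem hp rfl)
  obtain ⟨y, hy⟩ : (0 : ℝ) ∈ range gap :=
    intermediate_value_univ _ _ hgap
      ⟨(gap_eq hp₁ hq₁ hy₁.symm).trans_le (sub_nonpos.2 hx₁.le),
        (sub_nonneg.2 hx₀.le).trans_eq (gap_eq hp₀ hq₀ hy₀).symm⟩
  have hsame :
      Q.pointAt (inclusion inter_subset_right y) = P.pointAt (inclusion inter_subset_left y) :=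
    Prod.ext (sub_eq_zero.1 hy)
      ((Q.pointAt_snd _).trans (P.pointAt_snd (inclusion inter_subset_left y)).symm)
  exact disjoint_left.1 hd (P.pointAt_mem_image _) (hsame ▸ Q.pointAt_mem_image _)

theorem Prec.fst_lt_of_snd_eq (hd : Disjoint P.image Q.image) (h : P.Prec Q) {p q : ℝ × ℝ}
    (hp : p ∈ P.image) (hq : q ∈ Q.image) (hpq : p.2 = q.2) : p.1 < q.1 := by
  rcases lt_trichotomy p.1 q.1 with hlt | heq | hgt
  · exact hlt
  · exact absurd hq (disjoint_left.1 hd (Prod.ext heq hpq ▸ hp))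
  · exact absurd ⟨q, hq, p, hp, hpq.symm, hgt⟩ (h.not_prec hd)

theorem Prec.bottom_le_top (h : P.Prec Q) :
    (Q.toFun 0).2 ≤ (P.toFun 1).2 ∧ (P.toFun 0).2 ≤ (Q.toFun 1).2 := by
  obtain ⟨p, hp, q, hq, hpq, -⟩ := h
  exact ⟨(Q.snd_mem_yRange hq).1.trans (hpq ▸ (P.snd_mem_yRange hp).2),
    (P.snd_mem_yRange hp).1.trans (hpq ▸ (Q.snd_mem_yRange hq).2)⟩

/-- At the bottom height of the middle path, all three paths are present and ordered from left
to right. -/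
theorem Prec.trans_of_bottom_le (hPQ : Disjoint P.image Q.image)
    (hQR : Disjoint Q.image R.image) (h₁ : P.Prec Q) (h₂ : Q.Prec R)
    (hP : (P.toFun 0).2 ≤ (Q.toFun 0).2) (hR : (R.toFun 0).2 ≤ (Q.toFun 0).2) : P.Prec R := by
  have hQ₀ : Q.toFun 0 ∈ Q.image := ⟨0, left_mem_Icc.2 zero_le_one, rfl⟩
  have hyP : (Q.toFun 0).2 ∈ P.yRange := ⟨hP, h₁.bottom_le_top.1⟩
  have hyR : (Q.toFun 0).2 ∈ R.yRange := ⟨hR, h₂.bottom_le_top.2⟩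
  refine ⟨_, P.pointAt_mem_image ⟨_, hyP⟩, _, R.pointAt_mem_image ⟨_, hyR⟩,
    (P.pointAt_snd _).trans (R.pointAt_snd ⟨_, hyR⟩).symm, ?_⟩
  exact (h₁.fst_lt_of_snd_eq hPQ (P.pointAt_mem_image _) hQ₀ (P.pointAt_snd _)).trans
    (h₂.fst_lt_of_snd_eq hQR hQ₀ (R.pointAt_mem_image _) (R.pointAt_snd ⟨_, hyR⟩).symm)

end UpwardPath

theorem prec_no_cycle_general (S : Set UpwardPath)
    (hdisj : S.Pairwise fun P Q => Disjoint P.image Q.image) :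
    ¬ ∃ (n : ℕ) (f : Fin (n + 1) → UpwardPath),
        1 ≤ n ∧ (∀ i, f i ∈ S) ∧
        (∀ i : Fin n, (f i.castSucc).Prec (f i.succ)) ∧
        (f (Fin.last n)).Prec (f 0) := by
  rintro ⟨n, f, -, hmem, hchain, hwrap⟩
  refine Relation.not_isCycle_of_shortcut (R := fun P Q : S => P.1.Prec Q.1)
    (fun P => (P.1.toFun 0).2) (fun P => P.1.not_prec_self) ?_ (fun i => ⟨f i, hmem i⟩)
    (Relation.isCycle_iff.2 ⟨hchain, hwrap⟩)
  intro P Q R hPQ hQR hP hR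
  exact hPQ.trans_of_bottom_le (hdisj P.2 Q.2 hPQ.ne) (hdisj Q.2 R.2 hQR.ne) hQR hP hR

/-- The relation `≺` on a finite set of pairwise disjoint upward paths has no
directed cycles: there is no chain `P₀ ≺ P₁ ≺ ⋯ ≺ Pₙ` (with `n ≥ 1`) in `S`
closing up with `Pₙ ≺ P₀`. -/
theorem prec_no_cycle (S : Set UpwardPath) (hfin : S.Finite)
    (hdisj : S.Pairwise fun P Q => Disjoint P.image Q.image) :
    ¬ ∃ (n : ℕ) (f : Fin (n + 1) → UpwardPath),
        1 ≤ n ∧ (∀ i, f i ∈ S) ∧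
        (∀ i : Fin n, (f i.castSucc).Prec (f i.succ)) ∧
        (f (Fin.last n)).Prec (f 0) :=
  prec_no_cycle_general S hdisj
end

section
/- Let P be an upward path from s to t and P' another upward path from s to t (same endpoints). If P' contains a point of Right(P), then there exists an upward path Q from s to t such that the image of Q is contained in P ∪ Right(P) and Q contains a point of Right(P). -/
/-! At every height take the rightmost of the points of `P` and `P'` at that height. Over the
common interval of heights both paths are graphs `x = f(y)` of continuous functions, so this is
again an upward path from `s` to `t`. Where it leaves `P` it lies strictly to the right of `P`,
and at the height of the given point of `P'` in `Right(P)` it passes through that point. -/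

open Set

namespace UpwardPath

variable (P : UpwardPath)

theorem toFun_mem_image {t : ℝ} (ht : t ∈ Icc 0 1) : P.toFun t ∈ P.image :=
  mem_image_of_mem _ ht

theorem height_mem_yRange {t : ℝ} (ht : t ∈ Icc 0 1) : (P.toFun t).2 ∈ P.yRange :=
  ⟨P.strictMonoY.monotoneOn (left_mem_Icc.2 zero_le_one) ht ht.1,
    P.strictMonoY.monotoneOn ht (right_mem_Icc.2 zero_le_one) ht.2⟩

theorem exists_height_eq {y : ℝ} (hy : y ∈ P.yRange) :
    ∃ t ∈ Icc (0 : ℝ) 1, (P.toFun t).2 = y :=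
  intermediate_value_Icc zero_le_one P.continuousOn.snd hy

theorem injOn_snd_image : InjOn Prod.snd P.image := by
  rintro _ ⟨a, ha, rfl⟩ _ ⟨b, hb, rfl⟩ h
  rw [P.strictMonoY.injOn ha hb h]

/-- The height map is a continuous bijection from the compact `[0,1]` onto `P.yRange`, hence a
homeomorphism. -/
theorem exists_continuous_pointAtHeight :
    ∃ φ : ℝ → ℝ × ℝ, Continuous φ ∧
      ∀ y ∈ P.yRange, φ y ∈ P.image ∧ (φ y).2 = y := by
  have hle : (P.toFun 0).2 ≤ (P.toFun 1).2 :=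
    (P.height_mem_yRange (left_mem_Icc.2 zero_le_one)).2
  let height : Icc (0 : ℝ) 1 → Icc (P.toFun 0).2 (P.toFun 1).2 :=
    fun t => ⟨(P.toFun t).2, P.height_mem_yRange t.2⟩
  have height_bijective : Function.Bijective height := by
    refine ⟨fun a b h => Subtype.ext (P.strictMonoY.injOn a.2 b.2 (congrArg Subtype.val h)), ?_⟩
    rintro ⟨y, hy⟩
    obtain ⟨t, ht, hty⟩ := P.exists_height_eq hy
    exact ⟨⟨t, ht⟩, Subtype.ext hty⟩
  have height_continuous : Continuous height :=
    P.continuousOn.snd.domRestrict.subtype_mk _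
  let e := height_continuous.homeoOfEquivCompactToT2 (f := Equiv.ofBijective _ height_bijective)
  refine ⟨fun y => P.toFun (e.symm (projIcc _ _ hle y)), ?_, fun y hy => ⟨?_, ?_⟩⟩
  · exact P.continuousOn.comp_continuous
      (continuous_subtype_val.comp (e.symm.continuous.comp continuous_projIcc))
      fun _ => Subtype.property _
  · exact P.toFun_mem_image (Subtype.property _)
  · dsimp only
    rw [projIcc_of_mem hle hy]
    exact congrArg Subtype.val (e.apply_symm_apply ⟨y, hy⟩)

theorem mk_mem_Right {t : ℝ} (ht : t ∈ Icc 0 1) {x : ℝ} (hx : (P.toFun t).1 < x) :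
    (x, (P.toFun t).2) ∈ P.Right := by
  refine ⟨(P.height_mem_yRange ht).1, (P.height_mem_yRange ht).2, fun u hu => ?_⟩
  have hu_eq : (u, (P.toFun t).2) = P.toFun t := P.injOn_snd_image hu (P.toFun_mem_image ht) rfl
  rwa [← congrArg Prod.fst hu_eq] at hx

def withFst (f : ℝ → ℝ) (hf : ContinuousOn f (Icc 0 1)) : UpwardPath where
  toFun t := (f t, (P.toFun t).2)
  continuousOn := hf.prodMk P.continuousOn.snd
  injOn _ ha _ hb h := P.strictMonoY.injOn ha hb (Prod.ext_iff.1 h).2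
  strictMonoY := P.strictMonoY

/-- With `φ` the point-at-height map of `P'`, this is the rightmost combination of `P` and `P'`. -/
def combine (φ : ℝ → ℝ × ℝ) (hφ : Continuous φ) : UpwardPath :=
  P.withFst (fun t => (P.toFun t).1 ⊔ (φ (P.toFun t).2).1)
    (P.continuousOn.fst.sup (hφ.fst.comp_continuousOn P.continuousOn.snd))

variable (φ : ℝ → ℝ × ℝ) (hφ : Continuous φ)

theorem combine_apply (t : ℝ) :
    (P.combine φ hφ).toFun t = ((P.toFun t).1 ⊔ (φ (P.toFun t).2).1, (P.toFun t).2) :=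
  rfl

theorem combine_apply_of_eq {t : ℝ} (h : φ (P.toFun t).2 = P.toFun t) :
    (P.combine φ hφ).toFun t = P.toFun t := by
  rw [combine_apply, h, sup_idem]

theorem image_combine_subset : (P.combine φ hφ).image ⊆ P.image ∪ P.Right := by
  rintro _ ⟨t, ht, rfl⟩
  rcases le_or_gt (φ (P.toFun t).2).1 (P.toFun t).1 with hle | hlt
  · left
    rw [combine_apply, sup_of_le_left hle]
    exact P.toFun_mem_image ht
  · right
    rw [combine_apply, sup_of_le_right hlt.le]
    exact P.mk_mem_Right ht hlt

theorem mem_image_combine_of_mem_Right {q : ℝ × ℝ} (hq : q ∈ P.Right) (hφq : φ q.2 = q) :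
    q ∈ (P.combine φ hφ).image := by
  obtain ⟨t, ht, hty⟩ := P.exists_height_eq ⟨hq.1, hq.2.1⟩
  have hlt : (P.toFun t).1 < q.1 :=
    hq.2.2 _ (by rw [← hty, Prod.mk.eta]; exact P.toFun_mem_image ht)
  refine ⟨t, ht, ?_⟩
  rw [combine_apply, hty, hφq, sup_of_le_right hlt.le]

end UpwardPath

/-- Path combination lemma: if `P` and `P'` are upward paths with the same
endpoints and `P'` meets `Right P`, then there is an upward path `Q` with the
same endpoints whose image lies in `P ∪ Right P` and which meets `Right P`. -/
theorem path_comb (P P' : UpwardPath)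
    (hs : P'.toFun 0 = P.toFun 0) (ht : P'.toFun 1 = P.toFun 1)
    (hmeets : (P'.image ∩ P.Right).Nonempty) :
    ∃ Q : UpwardPath, Q.toFun 0 = P.toFun 0 ∧ Q.toFun 1 = P.toFun 1 ∧
      Q.image ⊆ P.image ∪ P.Right ∧ (Q.image ∩ P.Right).Nonempty := by
  obtain ⟨φ, hφ, hφP'⟩ := P'.exists_continuous_pointAtHeight
  have hφ_eq : ∀ q ∈ P'.image, q.2 ∈ P'.yRange → φ q.2 = q := fun q hq hqy =>
    P'.injOn_snd_image (hφP' _ hqy).1 hq (hφP' _ hqy).2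
  have hφ_endpoint : ∀ t ∈ Icc (0 : ℝ) 1, P'.toFun t = P.toFun t →
      φ (P.toFun t).2 = P.toFun t := fun t ht01 hPt => by
    rw [← hPt]
    exact hφ_eq _ (P'.toFun_mem_image ht01) (P'.height_mem_yRange ht01)
  obtain ⟨q, hqP', hqR⟩ := hmeets
  have hqy : q.2 ∈ P'.yRange := by
    rw [UpwardPath.yRange, hs, ht]
    exact ⟨hqR.1, hqR.2.1⟩
  exact ⟨P.combine φ hφ,
    P.combine_apply_of_eq φ hφ (hφ_endpoint 0 (left_mem_Icc.2 zero_le_one) hs),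
    P.combine_apply_of_eq φ hφ (hφ_endpoint 1 (right_mem_Icc.2 zero_le_one) ht),
    P.image_combine_subset φ hφ,
    q, P.mem_image_combine_of_mem_Right φ hφ hqR (hφ_eq q hqP' hqy), hqR⟩
end
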